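/- Let Ω ⊂ ℝ² be a nonempty bounded open set. Then there exists a constant c_G > 0, depending only on Ω, such that for every smooth, compactly supported vector field u : Ω → ℝ³ one has ∫_Ω G[u] dx ≥ c_G ∫_Ω |u|² dx, where G[u] = ‖∇u‖² + 2 u·curl u + 2|u|². -/

import Mathlib

open Real Set

/-- Spatial partial derivative `∂_k` on `ℝ²` of a scalar field, with the
convention `∂₃ = 0` (the index `k = 2`, i.e. the third one, gives `0`). -/
noncomputable def pd (k : Fin 3) (f : (Fin 2 → ℝ) → ℝ) (x : Fin 2 → ℝ) : ℝ :=
  fderiv ℝ f x (fun s : Fin 2 => if (s : ℕ) = (k : ℕ) then 1 else 0)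

/-- `curl v = (∂₂v₃, −∂₁v₃, ∂₁v₂ − ∂₂v₁)` of a 3-component field on `ℝ²`. -/
noncomputable def curl3 (v : (Fin 2 → ℝ) → Fin 3 → ℝ) (x : Fin 2 → ℝ) : Fin 3 → ℝ :=
  ![pd 1 (fun y => v y 2) x, -(pd 0 (fun y => v y 2) x),
    pd 0 (fun y => v y 1) x - pd 1 (fun y => v y 0) x]

/-- `G[v] = ‖∇v‖² + 2 v·curl v + 2|v|²`. -/
noncomputable def Gfun (v : (Fin 2 → ℝ) → Fin 3 → ℝ) (x : Fin 2 → ℝ) : ℝ :=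
  (∑ s : Fin 2, ∑ j : Fin 3, (pd s.castSucc (fun y => v y j) x) ^ 2)
    + 2 * ∑ j : Fin 3, v x j * curl3 v x j
    + 2 * ∑ j : Fin 3, (v x j) ^ 2

/-- The gradient `∇f = (∂₁f, ∂₂f)` of a scalar field on `ℝ²`. -/
noncomputable def grad (f : (Fin 2 → ℝ) → ℝ) (x : Fin 2 → ℝ) : Fin 2 → ℝ :=
  fun s => pd s.castSucc f x

/-- Euclidean dot product on `ℝ²`. -/
def dot2 (a b : Fin 2 → ℝ) : ℝ := ∑ s : Fin 2, a s * b s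

open MeasureTheory

/-! ### Auxiliary material -/

/-- The direction vector used by `pd k`. -/
noncomputable def ee (k : Fin 3) : Fin 2 → ℝ :=
  fun s => if (s : ℕ) = (k : ℕ) then 1 else 0

lemma pd_eq (k : Fin 3) (f : (Fin 2 → ℝ) → ℝ) (x) : pd k f x = fderiv ℝ f x (ee k) := rfl

section helpers
variable {f : (Fin 2 → ℝ) → ℝ} {x : Fin 2 → ℝ}

lemma contDiff_pd (hf : ContDiff ℝ (⊤ : ℕ∞) f) (k : Fin 3) : ContDiff ℝ (⊤ : ℕ∞) (pd k f) := by
  have h1 : ContDiff ℝ (⊤ : ℕ∞) (fderiv ℝ f) := hf.fderiv_right (by simp)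
  exact (ContinuousLinearMap.apply ℝ ℝ (ee k)).contDiff.comp h1

lemma pd_pd (hf : ContDiff ℝ (⊤ : ℕ∞) f) (k m : Fin 3) (x : Fin 2 → ℝ) :
    pd k (pd m f) x = fderiv ℝ (fderiv ℝ f) x (ee k) (ee m) := by
  have hdf : Differentiable ℝ (fderiv ℝ f) := (hf.fderiv_right (m := (⊤ : ℕ∞)) (by simp)).differentiable (by simp)
  have h2 : pd m f = fun y => (ContinuousLinearMap.apply ℝ ℝ (ee m)) (fderiv ℝ f y) := rfl
  rw [pd_eq, h2]
  rw [show (fun y => (ContinuousLinearMap.apply ℝ ℝ (ee m)) (fderiv ℝ f y))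
      = (ContinuousLinearMap.apply ℝ ℝ (ee m)) ∘ (fderiv ℝ f) from rfl]
  rw [((ContinuousLinearMap.apply ℝ ℝ (ee m)).hasFDerivAt.comp x (hdf x).hasFDerivAt).fderiv]
  rfl

lemma pd_symm (hf : ContDiff ℝ (⊤ : ℕ∞) f) (k m : Fin 3) (x : Fin 2 → ℝ) :
    pd k (pd m f) x = pd m (pd k f) x := by
  rw [pd_pd hf, pd_pd hf]
  exact hf.contDiffAt.isSymmSndFDerivAt (by rw [minSmoothness_of_isRCLikeNormedField]; exact WithTop.coe_le_coe.2 le_top) (ee k) (ee m)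

lemma pd_zero_of_eventually (h : f =ᶠ[nhds x] 0) (k : Fin 3) : pd k f x = 0 := by
  rw [pd_eq, h.fderiv_eq, show (0 : (Fin 2 → ℝ) → ℝ) = fun _ => (0 : ℝ) from rfl, fderiv_fun_const]
  simp

lemma pd_eventually_zero (h : f =ᶠ[nhds x] 0) (k : Fin 3) : pd k f =ᶠ[nhds x] 0 := by
  filter_upwards [h.eventually_nhds] with y hy
  exact pd_zero_of_eventually hy k

end helpers

/-- The sum-of-squares (nonnegative) part in the decomposition of `Gfun`. -/
noncomputable def Qf (u : (Fin 2 → ℝ) → Fin 3 → ℝ) (x : Fin 2 → ℝ) : ℝ :=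
  (u x 0 + pd 1 (fun y => u y 2) x) ^ 2 + (u x 1 - pd 0 (fun y => u y 2) x) ^ 2
    + (u x 2 + (pd 0 (fun y => u y 1) x - pd 1 (fun y => u y 0) x)) ^ 2
    + (pd 0 (fun y => u y 0) x + pd 1 (fun y => u y 1) x) ^ 2

/-- The cross part (with vanishing integral) in the decomposition of `Gfun`. -/
noncomputable def Rf (u : (Fin 2 → ℝ) → Fin 3 → ℝ) (x : Fin 2 → ℝ) : ℝ :=
  pd 0 (fun y => u y 1) x * pd 1 (fun y => u y 0) x
    - pd 0 (fun y => u y 0) x * pd 1 (fun y => u y 1) x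

lemma Gfun_eq (u : (Fin 2 → ℝ) → Fin 3 → ℝ) (x : Fin 2 → ℝ) :
    Gfun u x = ((∑ j, (u x j) ^ 2) + Qf u x) + 2 * Rf u x := by
  simp [Gfun, curl3, Qf, Rf, Fin.sum_univ_two, Fin.sum_univ_three]
  ring

/-- Coercivity of the quadratic form `G`: for a nonempty bounded open `Ω ⊂ ℝ²`
there is `c_G > 0`, depending only on `Ω`, such that every smooth compactly
supported vector field `u : Ω → ℝ³` satisfies `∫_Ω G[u] dx ≥ c_G ∫_Ω |u|² dx`. -/
theorem G_coercive (Ω : Set (Fin 2 → ℝ)) (hΩo : IsOpen Ω)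
    (hΩb : Bornology.IsBounded Ω) (hne : Ω.Nonempty) :
    ∃ cG : ℝ, 0 < cG ∧
      ∀ u : (Fin 2 → ℝ) → Fin 3 → ℝ,
        ContDiff ℝ (⊤ : ℕ∞) u → HasCompactSupport u → tsupport u ⊆ Ω →
        cG * ∫ x in Ω, (∑ j, (u x j) ^ 2) ≤ ∫ x in Ω, Gfun u x := by
  refine ⟨1, one_pos, fun u hu hcs hsub => ?_⟩
  -- components
  have hUc : ∀ j : Fin 3, ContDiff ℝ (⊤ : ℕ∞) (fun y => u y j) := fun j => contDiff_pi.1 hu j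
  have cU : ∀ j : Fin 3, Continuous (fun y => u y j) := fun j => (hUc j).continuous
  have cP : ∀ (k j : Fin 3), Continuous (pd k (fun y => u y j)) :=
    fun k j => (contDiff_pd (hUc j) k).continuous
  have cPP : ∀ (k m j : Fin 3), Continuous (pd k (pd m (fun y => u y j))) :=
    fun k m j => (contDiff_pd (contDiff_pd (hUc j) m) k).continuous
  -- vanishing outside the support of `u`
  have hev : ∀ x ∉ tsupport u, ∀ j : Fin 3, (fun y => u y j) =ᶠ[nhds x] 0 := by
    intro x hx j
    filter_upwards [(isClosed_tsupport u).isOpen_compl.mem_nhds hx] with y hy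
    have : u y = 0 := image_eq_zero_of_notMem_tsupport hy
    simp [this]
  have hUz : ∀ x ∉ tsupport u, ∀ j : Fin 3, u x j = 0 :=
    fun x hx j => (hev x hx j).self_of_nhds
  have hz1 : ∀ x ∉ tsupport u, ∀ k j : Fin 3, pd k (fun y => u y j) x = 0 :=
    fun x hx k j => pd_zero_of_eventually (hev x hx j) k
  have hz2 : ∀ x ∉ tsupport u, ∀ k m j : Fin 3, pd k (pd m (fun y => u y j)) x = 0 :=
    fun x hx k m j => pd_zero_of_eventually (pd_eventually_zero (hev x hx j) m) k
  -- generic integrability of continuous functions vanishing outside `tsupport u`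
  have hint : ∀ F : (Fin 2 → ℝ) → ℝ, Continuous F → (∀ x ∉ tsupport u, F x = 0) →
      Integrable F volume := by
    intro F hFc hFz
    exact hFc.integrable_of_hasCompactSupport (HasCompactSupport.intro hcs hFz)
  have intSum : Integrable (fun x => ∑ j, (u x j) ^ 2) volume := by
    refine hint _ (continuous_finset_sum _ fun j _ => (cU j).pow 2) fun x hx => ?_
    simp [hUz x hx]
  have intQ : Integrable (Qf u) volume := by
    refine hint _ ?_ fun x hx => ?_
    · exact (((((cU 0).add (cP 1 2)).pow 2).add (((cU 1).sub (cP 0 2)).pow 2)).add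
        (((cU 2).add ((cP 0 1).sub (cP 1 0))).pow 2)).add (((cP 0 0).add (cP 1 1)).pow 2)
    · simp [Qf, hUz x hx, hz1 x hx]
  have intR : Integrable (Rf u) volume := by
    refine hint _ ?_ fun x hx => ?_
    · exact ((cP 0 1).mul (cP 1 0)).sub ((cP 0 0).mul (cP 1 1))
    · simp [Rf, hz1 x hx]
  have intProd : ∀ F G : (Fin 2 → ℝ) → ℝ, Continuous F → Continuous G →
      (∀ x ∉ tsupport u, F x = 0) → Integrable (fun x => F x * G x) volume := by
    intro F G hF hG hFz
    exact hint _ (hF.mul hG) fun x hx => by simp [hFz x hx]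
  -- integration by parts: ∫ ∂₀U₁ ∂₁U₀ = ∫ ∂₀U₀ ∂₁U₁
  have hswap : ∫ x, pd 0 ((fun y => u y 1)) x * pd 1 ((fun y => u y 0)) x = ∫ x, pd 0 ((fun y => u y 0)) x * pd 1 ((fun y => u y 1)) x := by
    have dU0 : Differentiable ℝ ((fun y => u y 0)) := (hUc 0).differentiable (by simp)
    have d01 : Differentiable ℝ (pd 0 ((fun y => u y 1))) := (contDiff_pd (hUc 1) 0).differentiable (by simp)
    have d11 : Differentiable ℝ (pd 1 ((fun y => u y 1))) := (contDiff_pd (hUc 1) 1).differentiable (by simp)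
    have step1 : ∫ x, pd 0 ((fun y => u y 1)) x * pd 1 ((fun y => u y 0)) x
        = - ∫ x, pd 1 (pd 0 ((fun y => u y 1))) x * (fun y => u y 0) x := by
      exact integral_mul_fderiv_eq_neg_fderiv_mul_of_integrable
        (intProd _ _ (cPP 1 0 1) (cU 0) (fun x hx => hz2 x hx 1 0 1))
        (intProd _ _ (cP 0 1) (cP 1 0) (fun x hx => hz1 x hx 0 1))
        (intProd _ _ (cP 0 1) (cU 0) (fun x hx => hz1 x hx 0 1)) (fun x _ => d01 x) (fun x _ => dU0 x)
    have step2 : ∫ x, pd 1 ((fun y => u y 1)) x * pd 0 ((fun y => u y 0)) x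
        = - ∫ x, pd 0 (pd 1 ((fun y => u y 1))) x * (fun y => u y 0) x := by
      exact integral_mul_fderiv_eq_neg_fderiv_mul_of_integrable
        (intProd _ _ (cPP 0 1 1) (cU 0) (fun x hx => hz2 x hx 0 1 1))
        (intProd _ _ (cP 1 1) (cP 0 0) (fun x hx => hz1 x hx 1 1))
        (intProd _ _ (cP 1 1) (cU 0) (fun x hx => hz1 x hx 1 1)) (fun x _ => d11 x) (fun x _ => dU0 x)
    have hsymm : (fun x => pd 1 (pd 0 ((fun y => u y 1))) x * (fun y => u y 0) x)
        = fun x => pd 0 (pd 1 ((fun y => u y 1))) x * (fun y => u y 0) x := by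
      funext x; rw [pd_symm (hUc 1) 1 0 x]
    calc ∫ x, pd 0 ((fun y => u y 1)) x * pd 1 ((fun y => u y 0)) x
        = - ∫ x, pd 1 (pd 0 ((fun y => u y 1))) x * (fun y => u y 0) x := step1
      _ = - ∫ x, pd 0 (pd 1 ((fun y => u y 1))) x * (fun y => u y 0) x := by rw [hsymm]
      _ = ∫ x, pd 1 ((fun y => u y 1)) x * pd 0 ((fun y => u y 0)) x := step2.symm
      _ = ∫ x, pd 0 ((fun y => u y 0)) x * pd 1 ((fun y => u y 1)) x := by congr 1; funext x; ring
  have hR0 : ∫ x, Rf u x = 0 := by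
    have : ∫ x, Rf u x = (∫ x, pd 0 ((fun y => u y 1)) x * pd 1 ((fun y => u y 0)) x)
        - ∫ x, pd 0 ((fun y => u y 0)) x * pd 1 ((fun y => u y 1)) x := by
      rw [← integral_sub
        (intProd _ _ (cP 0 1) (cP 1 0) (fun x hx => hz1 x hx 0 1))
        (intProd _ _ (cP 0 0) (cP 1 1) (fun x hx => hz1 x hx 0 0))]
      rfl
    rw [this, hswap, sub_self]
  -- pass from set integrals to integrals over all of ℝ²
  have hGz : ∀ x, x ∉ Ω → Gfun u x = 0 := by
    intro x hx
    have hx' : x ∉ tsupport u := fun h => hx (hsub h)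
    rw [Gfun_eq]
    simp [Qf, Rf, hUz x hx', hz1 x hx']
  have hSz : ∀ x, x ∉ Ω → (∑ j, (u x j) ^ 2) = 0 := by
    intro x hx
    have hx' : x ∉ tsupport u := fun h => hx (hsub h)
    simp [hUz x hx']
  rw [setIntegral_eq_integral_of_forall_compl_eq_zero hGz,
    setIntegral_eq_integral_of_forall_compl_eq_zero hSz, one_mul]
  -- decompose the integral of `Gfun`
  have hdecomp : ∫ x, Gfun u x = (∫ x, ((∑ j, (u x j) ^ 2) + Qf u x)) + 2 * ∫ x, Rf u x := by
    have h1 : (fun x => Gfun u x)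
        = fun x => ((∑ j, (u x j) ^ 2) + Qf u x) + 2 * Rf u x := funext (Gfun_eq u)
    have intSumQ : Integrable (fun x => (∑ j, (u x j) ^ 2) + Qf u x) volume := intSum.add intQ
    have int2R : Integrable (fun x => 2 * Rf u x) volume := intR.const_mul 2
    rw [h1, integral_add intSumQ int2R, MeasureTheory.integral_const_mul]
  rw [hdecomp, hR0, mul_zero, add_zero]
  refine integral_mono intSum (intSum.add intQ) fun x => ?_
  have : 0 ≤ Qf u x := by unfold Qf; positivity
  simp only [Pi.add_apply]
  linarith
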